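/- arXiv:2602.18371 — 4 statements merged into one kernel-verified Lean document; each statement's English description precedes it below -/
import Mathlib

section
/- If a measurable set O ⊆ ℝ^d is (γ, ρ)-thick with respect to a continuous positive density ρ (i.e. |O ∩ B(x, ρ(x))| ≥ γ |B(x, ρ(x))| for all x), and ρ₂ is another continuous positive function with ρ(x) ≤ ρ₂(x) for all x, then O is (γ/9^d, 3ρ₂)-thick, i.e. |O ∩ B(x, 3ρ₂(x))| ≥ (γ/9^d) |B(x, 3ρ₂(x))| for all x ∈ ℝ^d. -/
/-!
Fix `x` and `R = ρ₂ x ≥ ρ x`. If `ρ` reaches `R / 3` somewhere on `closedBall x (2 * R)`, then by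
the intermediate value theorem some ball `ball z (ρ z)` with `R / 3 ≤ ρ z ≤ R` fits inside
`ball x (3 * R)`, and thickness at `z` already gives a `γ / 9 ^ d` fraction. Otherwise all the balls
`closedBall y (ρ y)` centred in `closedBall x (2 * R)` are small and lie in `ball x (3 * R)`; the
Vitali covering lemma extracts a disjoint subfamily whose fourfold enlargements cover
`closedBall x (2 * R)`, and summing thickness over that subfamily gives a `γ / 4 ^ d` fraction of
`ball x (2 * R)`, which is at least a `γ / 9 ^ d` fraction of `ball x (3 * R)`.
-/

open MeasureTheory Metric Set Module

def IsThick {α : Type*} [PseudoMetricSpace α] [MeasurableSpace α] (μ : Measure α) (γ : ℝ)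
    (ρ : α → ℝ) (O : Set α) : Prop :=
  ∀ x, ENNReal.ofReal γ * μ (ball x (ρ x)) ≤ μ (O ∩ ball x (ρ x))

theorem measure_inter_biUnion {α ι : Type*} [MeasurableSpace α] (μ : Measure α) {T : Set ι}
    {s : ι → Set α} (hT : T.Countable) (hd : T.PairwiseDisjoint s)
    (hs : ∀ i, MeasurableSet (s i)) (O : Set α) :
    μ (O ∩ ⋃ i ∈ T, s i) = ∑' i : T, μ (O ∩ s i) := by
  have : Countable T := hT.to_subtype
  rw [← Measure.restrict_apply' (MeasurableSet.biUnion hT fun i _ => hs i),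
    Measure.restrict_biUnion this hd hs, Measure.sum_apply_of_countable]
  simp only [Measure.restrict_apply' (hs _)]

section AddHaar

variable {E : Type*} [NormedAddCommGroup E] [NormedSpace ℝ E] [MeasurableSpace E] [BorelSpace E]
  [FiniteDimensional ℝ E] (μ : Measure E) [μ.IsAddHaarMeasure]

theorem addHaar_ball_mul_of_pos_eq (x y : E) {c : ℝ} (hc : 0 < c) (r : ℝ) :
    μ (ball x (c * r)) = ENNReal.ofReal (c ^ finrank ℝ E) * μ (ball y r) := by
  rw [Measure.addHaar_ball_mul_of_pos μ x hc, Measure.addHaar_ball_center μ y]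

theorem addHaar_closedBall_eq_addHaar_ball_of_pos (x : E) {r : ℝ} (hr : 0 < r) :
    μ (closedBall x r) = μ (ball x r) := by
  rw [Measure.addHaar_closedBall μ x hr.le, Measure.addHaar_ball_of_pos μ x hr]

end AddHaar

namespace IsThick

theorem le_measure_inter_of_ball_subset {α : Type*} [PseudoMetricSpace α] [MeasurableSpace α]
    {μ : Measure α} {γ : ℝ} {ρ : α → ℝ} {O : Set α} (hO : IsThick μ γ ρ O) {z : α} {r : ℝ}
    (hr : r ≤ ρ z) {t : Set α} (ht : ball z (ρ z) ⊆ t) :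
    ENNReal.ofReal γ * μ (ball z r) ≤ μ (O ∩ t) :=
  calc ENNReal.ofReal γ * μ (ball z r)
      ≤ ENNReal.ofReal γ * μ (ball z (ρ z)) := by gcongr
    _ ≤ μ (O ∩ ball z (ρ z)) := hO z
    _ ≤ μ (O ∩ t) := by gcongr

variable {E : Type*} [NormedAddCommGroup E] [NormedSpace ℝ E] [MeasurableSpace E] [BorelSpace E]
  [FiniteDimensional ℝ E] {μ : Measure E} [μ.IsAddHaarMeasure] {γ : ℝ} {ρ : E → ℝ} {O : Set E}

theorem mul_measure_le_of_forall_le (hO : IsThick μ γ ρ O) (hρ : ∀ y, 0 < ρ y) {s t : Set E}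
    {δ : ℝ} (hδ : ∀ y ∈ s, ρ y ≤ δ) (hst : ∀ y ∈ s, closedBall y (ρ y) ⊆ t) :
    ENNReal.ofReal γ * μ s ≤ ENNReal.ofReal (4 ^ finrank ℝ E) * μ (O ∩ t) := by
  obtain ⟨u, hus, hud, hcov⟩ := Vitali.exists_disjoint_subfamily_covering_enlargement_closedBall
    s id ρ δ hδ 4 (by norm_num)
  simp only [id] at hud hcov
  have hu : u.Countable := (hud.mono fun b => ball_subset_closedBall).countable_of_isOpen
    (fun _ _ => isOpen_ball) (fun b _ => nonempty_ball.2 (hρ b))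
  have hs_cover : s ⊆ ⋃ b ∈ u, closedBall b (4 * ρ b) := fun y hy => by
    obtain ⟨b, hb, hyb⟩ := hcov y hy
    exact mem_iUnion₂.2 ⟨b, hb, hyb (mem_closedBall_self (hρ y).le)⟩
  have h_enlarge (b : E) :
      μ (closedBall b (4 * ρ b)) = ENNReal.ofReal (4 ^ finrank ℝ E) * μ (ball b (ρ b)) := by
    rw [addHaar_closedBall_eq_addHaar_ball_of_pos μ b (by linarith [hρ b]),
      addHaar_ball_mul_of_pos_eq μ b b (by norm_num)]
  calc ENNReal.ofReal γ * μ s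
      ≤ ENNReal.ofReal γ * ∑' b : u, μ (closedBall b (4 * ρ b)) := by
        gcongr
        exact (measure_mono hs_cover).trans (measure_biUnion_le μ hu _)
    _ = ENNReal.ofReal (4 ^ finrank ℝ E) * ∑' b : u, ENNReal.ofReal γ * μ (ball b (ρ b)) := by
        simp only [h_enlarge, ← ENNReal.tsum_mul_left]
        congr 1 with b
        ring
    _ ≤ ENNReal.ofReal (4 ^ finrank ℝ E) * ∑' b : u, μ (O ∩ closedBall b (ρ b)) := by
        gcongr with b
        exact (hO b).trans (by gcongr; exact ball_subset_closedBall)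
    _ = ENNReal.ofReal (4 ^ finrank ℝ E) * μ (O ∩ ⋃ b ∈ u, closedBall b (ρ b)) := by
        rw [measure_inter_biUnion μ hu hud fun _ => measurableSet_closedBall]
    _ ≤ ENNReal.ofReal (4 ^ finrank ℝ E) * μ (O ∩ t) := by
        gcongr
        exact iUnion₂_subset fun b hb => hst b (hus hb)

theorem mul_measure_ball_div_three_le (hO : IsThick μ γ ρ O) (hρc : Continuous ρ)
    (hρ : ∀ y, 0 < ρ y) {x : E} {R : ℝ} (hR : ρ x ≤ R) :
    ENNReal.ofReal γ * μ (ball x (R / 3)) ≤ μ (O ∩ ball x (3 * R)) := by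
  have hR0 : 0 < R := (hρ x).trans_le hR
  by_cases h_reach : ∃ z ∈ closedBall x (2 * R), R / 3 ≤ ρ z
  · obtain ⟨z, hz, hz3, hzR⟩ : ∃ z ∈ closedBall x (2 * R), R / 3 ≤ ρ z ∧ ρ z ≤ R := by
      obtain ⟨y, hy, hy3⟩ := h_reach
      rcases le_or_gt (R / 3) (ρ x) with hx3 | hx3
      · exact ⟨x, mem_closedBall_self (by linarith), hx3, hR⟩
      obtain ⟨z, hz, hz3⟩ := (convex_closedBall x (2 * R)).isPreconnected.intermediate_value
        (mem_closedBall_self (by linarith)) hy hρc.continuousOn ⟨hx3.le, hy3⟩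
      exact ⟨z, hz, hz3.ge, by linarith⟩
    rw [Measure.addHaar_ball_center μ x, ← Measure.addHaar_ball_center μ z]
    exact hO.le_measure_inter_of_ball_subset hz3
      (ball_subset_ball' (by linarith [mem_closedBall.1 hz]))
  · push Not at h_reach
    have h_small := hO.mul_measure_le_of_forall_le hρ (t := ball x (3 * R))
      (fun y hy => (h_reach y hy).le)
      fun y hy => closedBall_subset_ball' (by linarith [h_reach y hy, mem_closedBall.1 hy])
    have h_ball : ENNReal.ofReal (4 ^ finrank ℝ E) * μ (ball x (R / 3))
        ≤ μ (closedBall x (2 * R)) :=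
      calc ENNReal.ofReal (4 ^ finrank ℝ E) * μ (ball x (R / 3))
          ≤ ENNReal.ofReal (4 ^ finrank ℝ E) * μ (ball x (R / 2)) := by
            gcongr
            linarith
        _ = μ (ball x (4 * (R / 2))) := (addHaar_ball_mul_of_pos_eq μ x x (by norm_num) _).symm
        _ ≤ μ (closedBall x (2 * R)) := measure_mono <|
            ball_subset_closedBall.trans (closedBall_subset_closedBall (by linarith))
    rw [← ENNReal.mul_le_mul_iff_right (a := ENNReal.ofReal (4 ^ finrank ℝ E)) (by positivity)
      ENNReal.ofReal_ne_top]
    calc ENNReal.ofReal (4 ^ finrank ℝ E) * (ENNReal.ofReal γ * μ (ball x (R / 3)))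
        = ENNReal.ofReal γ * (ENNReal.ofReal (4 ^ finrank ℝ E) * μ (ball x (R / 3))) :=
          mul_left_comm _ _ _
      _ ≤ ENNReal.ofReal γ * μ (closedBall x (2 * R)) := by gcongr
      _ ≤ ENNReal.ofReal (4 ^ finrank ℝ E) * μ (O ∩ ball x (3 * R)) := h_small

theorem three_mul_of_le (hO : IsThick μ γ ρ O) (hρc : Continuous ρ) (hρ : ∀ y, 0 < ρ y)
    {ρ₂ : E → ℝ} (hle : ∀ x, ρ x ≤ ρ₂ x) :
    IsThick μ (γ / 9 ^ finrank ℝ E) (fun x => 3 * ρ₂ x) O := by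
  intro x
  have h9 : (0 : ℝ) < 9 ^ finrank ℝ E := by positivity
  calc ENNReal.ofReal (γ / 9 ^ finrank ℝ E) * μ (ball x (3 * ρ₂ x))
      = ENNReal.ofReal γ * μ (ball x (ρ₂ x / 3)) := by
        rw [show 3 * ρ₂ x = 9 * (ρ₂ x / 3) by ring, addHaar_ball_mul_of_pos_eq μ x x (by norm_num),
          ENNReal.ofReal_div_of_pos h9, ← mul_assoc,
          ENNReal.div_mul_cancel (by positivity) ENNReal.ofReal_ne_top]
    _ ≤ μ (O ∩ ball x (3 * ρ₂ x)) := hO.mul_measure_ball_div_three_le hρc hρ (hle x)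

end IsThick

theorem stmt0_general (d : ℕ) (γ : ℝ)
    (ρ ρ₂ : EuclideanSpace ℝ (Fin d) → ℝ)
    (hρ_cont : Continuous ρ) (hρ_pos : ∀ x, 0 < ρ x)
    (hle : ∀ x, ρ x ≤ ρ₂ x)
    (O : Set (EuclideanSpace ℝ (Fin d)))
    (hthick : ∀ x, ENNReal.ofReal γ * volume (ball x (ρ x)) ≤ volume (O ∩ ball x (ρ x))) :
    ∀ x, ENNReal.ofReal (γ / 9 ^ d) * volume (ball x (3 * ρ₂ x))
      ≤ volume (O ∩ ball x (3 * ρ₂ x)) := by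
  have h := IsThick.three_mul_of_le hthick hρ_cont hρ_pos hle
  rwa [finrank_euclideanSpace_fin] at h

/-- If a measurable set `O ⊆ ℝ^d` is `(γ, ρ)`-thick w.r.t. a continuous positive density `ρ`,
and `ρ₂` is another continuous positive function with `ρ ≤ ρ₂` pointwise, then `O` is
`(γ/9^d, 3ρ₂)`-thick. -/
theorem stmt0 (d : ℕ) (γ : ℝ) (hγ0 : 0 < γ) (hγ1 : γ ≤ 1)
    (ρ ρ₂ : EuclideanSpace ℝ (Fin d) → ℝ)
    (hρ_cont : Continuous ρ) (hρ_pos : ∀ x, 0 < ρ x)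
    (hρ₂_cont : Continuous ρ₂) (hρ₂_pos : ∀ x, 0 < ρ₂ x)
    (hle : ∀ x, ρ x ≤ ρ₂ x)
    (O : Set (EuclideanSpace ℝ (Fin d))) (hO : MeasurableSet O)
    (hthick : ∀ x, ENNReal.ofReal γ * volume (ball x (ρ x)) ≤ volume (O ∩ ball x (ρ x))) :
    ∀ x, ENNReal.ofReal (γ / 9 ^ d) * volume (ball x (3 * ρ₂ x))
      ≤ volume (O ∩ ball x (3 * ρ₂ x)) :=
  stmt0_general d γ ρ ρ₂ hρ_cont hρ_pos hle O hthick
end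

section
/- For every s > 0 there exists a constant c_s > 0 such that for all τ, λ ≥ 0 and D > 0 with |τ − λ^{1/s}| > D, one has |τ^s − λ| ≥ c_s · D · (λ + D^s)^{1 − 1/s}. -/
open Real

/-- For `t ∈ [0,1]` and `s > 0`, `min s 1 * (1 - t) ≤ 1 - t ^ s`. -/
lemma aux_one_sub_rpow (s t : ℝ) (hs : 0 < s) (ht0 : 0 ≤ t) (ht1 : t ≤ 1) :
    min s 1 * (1 - t) ≤ 1 - t ^ s := by
  rcases le_or_gt 1 s with h1 | h1
  · rw [min_eq_right h1]
    have : t ^ s ≤ t := by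
      rcases eq_or_lt_of_le ht0 with rfl | ht0'
      · rw [Real.zero_rpow hs.ne']
      · calc t ^ s ≤ t ^ (1 : ℝ) :=
              Real.rpow_le_rpow_of_exponent_ge ht0' ht1 h1
          _ = t := Real.rpow_one t
    linarith
  · rw [min_eq_left h1.le]
    have hb : t ^ s ≤ 1 + s * (t - 1) := by
      have := rpow_one_add_le_one_add_mul_self (s := t - 1) (by linarith) hs.le h1.le
      simpa using this
    nlinarith

/-- Key algebraic bound: for `0 ≤ b ≤ a`, `min s 1 * (a^(s-1) * (a - b)) ≤ a^s - b^s`. -/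
lemma aux_sub_rpow (s a b : ℝ) (hs : 0 < s) (hb : 0 ≤ b) (hab : b ≤ a) (ha : 0 < a) :
    min s 1 * (a ^ (s - 1) * (a - b)) ≤ a ^ s - b ^ s := by
  have ht0 : 0 ≤ b / a := div_nonneg hb ha.le
  have ht1 : b / a ≤ 1 := (div_le_one ha).2 hab
  have hkey := aux_one_sub_rpow s (b / a) hs ht0 ht1
  have has : 0 < a ^ s := Real.rpow_pos_of_pos ha s
  have hbs : b ^ s = a ^ s * (b / a) ^ s := by
    rw [← Real.mul_rpow ha.le ht0, mul_div_cancel₀ _ ha.ne']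
  have hmul : a ^ s * (min s 1 * (1 - b / a)) ≤ a ^ s * (1 - (b / a) ^ s) := by
    exact mul_le_mul_of_nonneg_left hkey has.le
  have heq1 : a ^ s * (1 - (b / a) ^ s) = a ^ s - b ^ s := by
    rw [hbs]; ring
  have heq2 : a ^ s * (min s 1 * (1 - b / a)) = min s 1 * (a ^ (s - 1) * (a - b)) := by
    rw [Real.rpow_sub ha, Real.rpow_one]
    field_simp
  rw [heq1, heq2] at hmul
  exact hmul

/-- For every `s > 0` there is `c_s > 0` such that for all `τ, λ ≥ 0` and `D > 0` with
`|τ − λ^{1/s}| > D`, one has `|τ^s − λ| ≥ c_s D (λ + D^s)^{1 − 1/s}`. -/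
theorem stmt2 (s : ℝ) (hs : 0 < s) :
    ∃ c : ℝ, 0 < c ∧ ∀ τ lam D : ℝ, 0 ≤ τ → 0 ≤ lam → 0 < D →
      D < |τ - lam ^ (1 / s)| →
      c * D * (lam + D ^ s) ^ (1 - 1 / s) ≤ |τ ^ s - lam| := by
  set c0 : ℝ := min s 1 with hc0def
  have hc0 : 0 < c0 := lt_min hs one_pos
  set k : ℝ := min 1 ((2 : ℝ) ^ (s - 1)) with hkdef
  have hk : 0 < k := lt_min one_pos (Real.rpow_pos_of_pos two_pos _)
  set K : ℝ := max 1 ((2 : ℝ) ^ (1 - 1 / s)) with hKdef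
  have hK : 0 < K := lt_of_lt_of_le one_pos (le_max_left _ _)
  refine ⟨c0 * k / K, by positivity, ?_⟩
  intro τ lam D hτ hlam hD hgap
  set μ : ℝ := lam ^ (1 / s) with hμdef
  have hμ0 : 0 ≤ μ := Real.rpow_nonneg hlam _
  have hμs : μ ^ s = lam := by
    rw [hμdef, ← Real.rpow_mul hlam, one_div, inv_mul_cancel₀ hs.ne', Real.rpow_one]
  set M : ℝ := max μ D with hMdef
  have hM : 0 < M := lt_of_lt_of_le hD (le_max_right _ _)
  have hMs : 0 < M ^ (s - 1) := Real.rpow_pos_of_pos hM _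
  -- Step A : c0 * k * (M^(s-1) * D) ≤ |τ^s - lam|
  have stepA : c0 * k * (M ^ (s - 1) * D) ≤ |τ ^ s - lam| := by
    rcases le_or_gt μ τ with hcase | hcase
    · -- τ ≥ μ, so τ > μ + D
      have hgap' : μ + D < τ := by
        rw [abs_of_nonneg (by linarith)] at hgap; linarith
      have hmono : (μ + D) ^ s ≤ τ ^ s :=
        Real.rpow_le_rpow (by linarith) hgap'.le hs.le
      have hlow := aux_sub_rpow s (μ + D) μ hs hμ0 (by linarith) (by linarith)
      have hbase : k * M ^ (s - 1) ≤ (μ + D) ^ (s - 1) := by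
        rcases le_or_gt 1 s with h1 | h1
        · have : M ^ (s - 1) ≤ (μ + D) ^ (s - 1) := by
            apply Real.rpow_le_rpow hM.le _ (by linarith)
            rw [hMdef]; exact max_le (by linarith) (by linarith)
          calc k * M ^ (s - 1) ≤ 1 * M ^ (s - 1) :=
                mul_le_mul_of_nonneg_right (min_le_left _ _) hMs.le
            _ = M ^ (s - 1) := one_mul _
            _ ≤ (μ + D) ^ (s - 1) := this
        · have h2M : μ + D ≤ 2 * M := by
            have : μ ≤ M := le_max_left _ _
            have : D ≤ M := le_max_right _ _
            linarith [le_max_left μ D]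
          have : (2 * M) ^ (s - 1) ≤ (μ + D) ^ (s - 1) :=
            Real.rpow_le_rpow_of_nonpos (by linarith) h2M (by linarith)
          have h2Meq : (2 * M) ^ (s - 1) = (2 : ℝ) ^ (s - 1) * M ^ (s - 1) :=
            Real.mul_rpow (by norm_num) hM.le
          calc k * M ^ (s - 1) ≤ (2 : ℝ) ^ (s - 1) * M ^ (s - 1) :=
                mul_le_mul_of_nonneg_right (min_le_right _ _) hMs.le
            _ = (2 * M) ^ (s - 1) := h2Meq.symm
            _ ≤ (μ + D) ^ (s - 1) := this
      have habs : |τ ^ s - lam| = τ ^ s - μ ^ s := by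
        have hmid : μ ^ s ≤ (μ + D) ^ s :=
          Real.rpow_le_rpow hμ0 (by linarith) hs.le
        rw [← hμs, abs_of_nonneg (by linarith)]
      rw [habs]
      calc c0 * k * (M ^ (s - 1) * D)
          = c0 * ((k * M ^ (s - 1)) * D) := by ring
        _ ≤ c0 * ((μ + D) ^ (s - 1) * D) := by
            apply mul_le_mul_of_nonneg_left _ hc0.le
            exact mul_le_mul_of_nonneg_right hbase hD.le
        _ = c0 * ((μ + D) ^ (s - 1) * ((μ + D) - μ)) := by ring_nf
        _ ≤ (μ + D) ^ s - μ ^ s := hlow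
        _ ≤ τ ^ s - μ ^ s := by linarith
    · -- μ > τ, so τ < μ - D, and μ > D so M = μ
      have hgap' : τ + D < μ := by
        rw [abs_of_nonpos (by linarith)] at hgap; linarith
      have hDμ : D < μ := by linarith
      have hMeq : M = μ := max_eq_left hDμ.le
      have hmono : τ ^ s ≤ (μ - D) ^ s :=
        Real.rpow_le_rpow hτ (by linarith) hs.le
      have hlow := aux_sub_rpow s μ (μ - D) hs (by linarith) (by linarith)
        (by linarith)
      have habs : |τ ^ s - lam| = μ ^ s - τ ^ s := by
        rw [← hμs]
        have : τ ^ s ≤ μ ^ s := Real.rpow_le_rpow hτ (by linarith) hs.le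
        rw [abs_of_nonpos (by linarith)]; ring
      rw [habs, hMeq]
      have hμD : (μ - D) ^ s ≤ μ ^ s := Real.rpow_le_rpow (by linarith) (by linarith) hs.le
      calc c0 * k * (μ ^ (s - 1) * D)
          ≤ c0 * 1 * (μ ^ (s - 1) * D) := by
            apply mul_le_mul_of_nonneg_right _ (by positivity)
            exact mul_le_mul_of_nonneg_left (min_le_left _ _) hc0.le
        _ = c0 * (μ ^ (s - 1) * (μ - (μ - D))) := by ring_nf
        _ ≤ μ ^ s - (μ - D) ^ s := hlow
        _ ≤ μ ^ s - τ ^ s := by linarith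
  -- Step B : (lam + D^s)^(1 - 1/s) ≤ K * M^(s-1)
  have hDs : 0 < D ^ s := Real.rpow_pos_of_pos hD s
  have hμsM : μ ^ s ≤ M ^ s := Real.rpow_le_rpow hμ0 (le_max_left _ _) hs.le
  have hDsM : D ^ s ≤ M ^ s := Real.rpow_le_rpow hD.le (le_max_right _ _) hs.le
  have hMsum : M ^ s ≤ lam + D ^ s := by
    rw [← hμs]
    rcases max_cases μ D with ⟨h, _⟩ | ⟨h, _⟩
    · rw [hMdef, h]; linarith
    · rw [hMdef, h]; linarith [Real.rpow_nonneg hμ0 s]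
  have hMspow : (M ^ s) ^ (1 - 1 / s) = M ^ (s - 1) := by
    rw [← Real.rpow_mul hM.le]
    congr 1
    field_simp
  have stepB : (lam + D ^ s) ^ (1 - 1 / s) ≤ K * M ^ (s - 1) := by
    have hsum2 : lam + D ^ s ≤ 2 * M ^ s := by rw [← hμs]; linarith
    rcases le_or_gt 1 s with h1 | h1
    · have he : (0 : ℝ) ≤ 1 - 1 / s := by
        have : 1 / s ≤ 1 := by
          rw [div_le_one hs]; exact h1
        linarith
      calc (lam + D ^ s) ^ (1 - 1 / s)
          ≤ (2 * M ^ s) ^ (1 - 1 / s) := by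
            apply Real.rpow_le_rpow (by positivity) hsum2 he
        _ = (2 : ℝ) ^ (1 - 1 / s) * M ^ (s - 1) := by
            rw [Real.mul_rpow (by norm_num) (Real.rpow_nonneg hM.le s), hMspow]
        _ ≤ K * M ^ (s - 1) :=
            mul_le_mul_of_nonneg_right (le_max_right _ _) hMs.le
    · have he : 1 - 1 / s ≤ 0 := by
        have : 1 ≤ 1 / s := by
          rw [le_div_iff₀ hs]; linarith
        linarith
      calc (lam + D ^ s) ^ (1 - 1 / s)
          ≤ (M ^ s) ^ (1 - 1 / s) := by
            apply Real.rpow_le_rpow_of_nonpos (by positivity) hMsum he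
        _ = M ^ (s - 1) := hMspow
        _ ≤ K * M ^ (s - 1) := by
            nlinarith [le_max_left (1 : ℝ) ((2 : ℝ) ^ (1 - 1 / s))]
  calc c0 * k / K * D * (lam + D ^ s) ^ (1 - 1 / s)
      ≤ c0 * k / K * D * (K * M ^ (s - 1)) := by
        apply mul_le_mul_of_nonneg_left stepB (by positivity)
    _ = c0 * k * (M ^ (s - 1) * D) := by
        field_simp
    _ ≤ |τ ^ s - lam| := stepA
end

section
/- Let d ≥ 1, β > 0, and λ > 0. Define the annulus A_{λ,β} = {ξ ∈ ℝ^d : | |ξ| − √λ | ≤ λ^{−β/2}}. For every ε > 0, set L = 3^{1+β} C_d' / (ε ω_d) (where C_d' is a dimensional constant bounding spherical cap areas and ω_d is the volume of the unit ball), and define ρ̃(x) = min(L, L^{1+β} |x|^{−β}). Then there exists λ₀ = (2L+1)² such that for all λ ≥ λ₀ and all x ∈ ℝ^d, |A_{λ,β} ∩ B(x, ρ̃(x))| ≤ ε |B(x, ρ̃(x))|. -/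
/-!
In polar coordinates, a point `ξ` of `A_{λ,β} ∩ B(x, ρ)` has radius in an interval of length
`2δ`, `δ = λ^{-β/2}`, and, by the identity `|ξ||x| · |ξ/|ξ| - x/|x||² = |ξ - x|² - (|ξ| - |x|)²`,
direction in a cap of radius about `ρ / √λ` around `x/|x|`. Hence the intersection has measure
at most `C_d' ρ^{d-1} · 2δ`. Since `|x| ≤ 2√λ`, the density satisfies
`ρ ≥ L^{1+β} (2√λ)^{-β}`, and the choice of `L` makes `2 C_d' δ ≤ ε ω_d ρ`, i.e. the bound is
at most `ε |B(x, ρ)|`. Covering the sphere by two caps of radius `2` gives `C_d' ≥ d ω_d / 2`,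
so `L ≥ 3d/2` when `ε < 1`; this keeps the cap radius times the outer radius `√λ + δ` below
`2ρ`.
-/

open MeasureTheory Metric Set Module

section InnerProductSpace

variable {F : Type*} [NormedAddCommGroup F] [InnerProductSpace ℝ F]

lemma norm_mul_norm_mul_norm_inv_smul_sub_inv_smul_sq {u v : F} (hu : u ≠ 0) (hv : v ≠ 0) :
    ‖u‖ * ‖v‖ * ‖‖u‖⁻¹ • u - ‖v‖⁻¹ • v‖ ^ 2 = ‖u - v‖ ^ 2 - (‖u‖ - ‖v‖) ^ 2 := by
  have hu' : ‖u‖ ≠ 0 := norm_ne_zero_iff.2 hu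
  have hv' : ‖v‖ ≠ 0 := norm_ne_zero_iff.2 hv
  rw [norm_sub_sq_real, norm_sub_sq_real, real_inner_smul_left, real_inner_smul_right,
    norm_smul, norm_smul, norm_inv, norm_inv, norm_norm, norm_norm]
  field_simp
  ring

lemma norm_inv_smul_sub_inv_smul_lt {u v : F} {a c r : ℝ} (ha : 0 < a) (hc : 0 < c)
    (hu : a ≤ ‖u‖) (hv : c ≤ ‖v‖) (huv : ‖u - v‖ < r) :
    ‖‖u‖⁻¹ • u - ‖v‖⁻¹ • v‖ < r / √(a * c) := by
  have hu₀ : u ≠ 0 := norm_pos_iff.1 (ha.trans_le hu)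
  have hv₀ : v ≠ 0 := norm_pos_iff.1 (hc.trans_le hv)
  rw [lt_div_iff₀ (by positivity)]
  refine lt_of_pow_lt_pow_left₀ 2 ((norm_nonneg _).trans huv.le) ?_
  rw [mul_pow, Real.sq_sqrt (by positivity)]
  calc ‖‖u‖⁻¹ • u - ‖v‖⁻¹ • v‖ ^ 2 * (a * c)
      ≤ ‖‖u‖⁻¹ • u - ‖v‖⁻¹ • v‖ ^ 2 * (‖u‖ * ‖v‖) := by gcongr
    _ = ‖u - v‖ ^ 2 - (‖u‖ - ‖v‖) ^ 2 := by
      rw [← norm_mul_norm_mul_norm_inv_smul_sub_inv_smul_sq hu₀ hv₀]; ring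
    _ ≤ ‖u - v‖ ^ 2 := sub_le_self _ (sq_nonneg _)
    _ < r ^ 2 := by gcongr

end InnerProductSpace

lemma abs_norm_sub_lt_of_mem_inter_ball {E : Type*} [SeminormedAddCommGroup E] {s δ r : ℝ}
    {x ξ : E} (hξ : ξ ∈ {ξ : E | |‖ξ‖ - s| ≤ δ} ∩ ball x r) : |‖x‖ - s| < δ + r := by
  calc |‖x‖ - s| ≤ |‖x‖ - ‖ξ‖| + |‖ξ‖ - s| := abs_sub_le _ _ _
    _ ≤ ‖x - ξ‖ + δ := add_le_add (abs_norm_sub_norm_le _ _) hξ.1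
    _ < δ + r := by rw [add_comm, ← dist_eq_norm, dist_comm]; gcongr; exact hξ.2

lemma add_le_two_mul_sqrt_mul {L s δ r : ℝ} (hL : 3 ≤ L) (hs : 2 * L + 1 ≤ s) (hδ₀ : 0 ≤ δ)
    (hδ₁ : δ ≤ 1) (hr : r ≤ L) : s + δ ≤ 2 * √((s - δ) * (s - δ - r)) := by
  have hprod : (s - 1) * (s - 1 - L) ≤ (s - δ) * (s - δ - r) :=
    mul_le_mul (by linarith) (by linarith) (by linarith) (by linarith)
  -- `4 (s - 1) (s - 1 - L) - (s + 1) ^ 2` is a polynomial with nonnegative coefficients in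
  -- `s - 2 L - 1 ≥ 0` and `L - 3 ≥ 0`
  have hquad : (s + 1) ^ 2 ≤ 4 * ((s - 1) * (s - 1 - L)) := by
    nlinarith [mul_nonneg (sub_nonneg.2 hs) (sub_nonneg.2 hL)]
  rw [← div_le_iff₀' two_pos, Real.le_sqrt (by linarith) (by nlinarith)]
  nlinarith

lemma three_mul_rpow_neg_le_mul_min {β L s t : ℝ} (hβ : 0 ≤ β) (hL : 2 ≤ 3 * L) (hs : 1 ≤ s)
    (ht : 0 < t) (hts : t ≤ 2 * s) :
    3 * s ^ (-β) ≤ 3 ^ (1 + β) / L * min L (L ^ (1 + β) * t ^ (-β)) := by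
  have hL₀ : 0 < L := by linarith
  have h3 : (3 : ℝ) ^ (1 + β) = 3 * 3 ^ β := by rw [Real.rpow_add three_pos, Real.rpow_one]
  have hsβ : s ^ (-β) ≤ 1 := Real.rpow_le_one_of_one_le_of_nonpos hs (by linarith)
  rw [mul_min_of_nonneg _ _ (by positivity : (0 : ℝ) ≤ 3 ^ (1 + β) / L)]
  refine le_min ?_ ?_
  · rw [div_mul_cancel₀ _ hL₀.ne', h3]
    nlinarith [Real.one_le_rpow (by norm_num : (1 : ℝ) ≤ 3) hβ]
  · calc 3 * s ^ (-β) = 3 * 2 ^ β * (2 * s) ^ (-β) := by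
          rw [Real.mul_rpow two_pos.le (by linarith), Real.rpow_neg two_pos.le]
          field_simp
      _ ≤ 3 * (3 * L) ^ β * t ^ (-β) := by
          have h2 : (2 : ℝ) ^ β ≤ (3 * L) ^ β := by gcongr
          exact mul_le_mul (by linarith) (Real.rpow_le_rpow_of_nonpos ht hts (neg_nonpos.2 hβ))
            (by positivity) (by positivity)
      _ = 3 ^ (1 + β) / L * (L ^ (1 + β) * t ^ (-β)) := by
          rw [h3, Real.mul_rpow three_pos.le hL₀.le, Real.rpow_add hL₀, Real.rpow_one]
          field_simp

lemma three_halves_mul_le_of_mul_eq {n ω C ε L β : ℝ} (hβ : 0 ≤ β) (hn : 0 ≤ n) (hω : 0 < ω)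
    (hε : 0 < ε) (hε₁ : ε ≤ 1) (hC : n * ω ≤ 2 * C) (hL : ε * ω * L = 3 ^ (1 + β) * C) :
    3 / 2 * n ≤ L := by
  have h3 : (3 : ℝ) ≤ 3 ^ (1 + β) := by
    simpa using
      Real.rpow_le_rpow_of_exponent_le (by norm_num : (1 : ℝ) ≤ 3) (by linarith : 1 ≤ 1 + β)
  have hC₀ : 0 ≤ C := by nlinarith
  have hL₀ : 0 ≤ L := by
    by_contra! h
    nlinarith [mul_pos hε hω, mul_nonneg (by linarith : (0 : ℝ) ≤ 3 ^ (1 + β)) hC₀]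
  nlinarith [mul_le_mul_of_nonneg_right h3 hC₀,
    mul_le_mul_of_nonneg_right hε₁ (mul_nonneg hω.le hL₀)]

lemma MeasureTheory.Measure.volumeIoiPow_preimage_Icc_le (n : ℕ) (a b : ℝ) :
    volumeIoiPow n (((↑) : Ioi (0 : ℝ) → ℝ) ⁻¹' Icc a b) ≤
      ENNReal.ofReal (b ^ n) * ENNReal.ofReal (b - a) := by
  have hJ : MeasurableSet (((↑) : Ioi (0 : ℝ) → ℝ) ⁻¹' Icc a b) :=
    measurable_subtype_coe measurableSet_Icc
  rw [volumeIoiPow, withDensity_apply _ hJ]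
  calc _ ≤ ∫⁻ _ in ((↑) : Ioi (0 : ℝ) → ℝ) ⁻¹' Icc a b, ENNReal.ofReal (b ^ n)
          ∂volume.comap ((↑) : Ioi (0 : ℝ) → ℝ) :=
        setLIntegral_mono' hJ fun t ht ↦
          ENNReal.ofReal_le_ofReal (pow_le_pow_left₀ t.2.out.le ht.2 n)
    _ = ENNReal.ofReal (b ^ n) * volume (Ioi 0 ∩ Icc a b) := by
      rw [setLIntegral_const, comap_subtype_coe_apply measurableSet_Ioi,
        Subtype.image_preimage_coe]
    _ ≤ ENNReal.ofReal (b ^ n) * ENNReal.ofReal (b - a) := by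
      grw [inter_subset_right, Real.volume_Icc]

section Polar

variable {E : Type*} [NormedAddCommGroup E] [NormedSpace ℝ E] [FiniteDimensional ℝ E]
  [MeasurableSpace E] [BorelSpace E] (μ : Measure E) [μ.IsAddHaarMeasure]

def CapBound (K : ℝ) : Prop :=
  ∀ (ω₀ : sphere (0 : E) 1) (δ : ℝ), 0 < δ →
    μ.toSphere {ω | ‖(ω : E) - ω₀‖ < δ} ≤ ENNReal.ofReal (K * δ ^ (finrank ℝ E - 1))

lemma measure_le_toSphere_mul_of_forall_mem {C : Set (sphere (0 : E) 1)} (hC : MeasurableSet C)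
    {a b : ℝ} (ha : 0 < a) {S : Set E}
    (hS : ∀ ξ ∈ S, ‖ξ‖ ∈ Icc a b ∧ ‖ξ‖⁻¹ • ξ ∈ ((↑) : sphere (0 : E) 1 → E) '' C) :
    μ S ≤ μ.toSphere C *
      (ENNReal.ofReal (b ^ (finrank ℝ E - 1)) * ENNReal.ofReal (b - a)) := by
  set J : Set (Ioi (0 : ℝ)) := (↑) ⁻¹' Icc a b
  have hS_sub : S ⊆ (↑) '' (homeomorphUnitSphereProd E ⁻¹' (C ×ˢ J)) := by
    intro ξ hξ
    obtain ⟨hξJ, ω, hωC, hωξ⟩ := hS ξ hξ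
    refine ⟨⟨ξ, norm_pos_iff.1 (ha.trans_le hξJ.1)⟩, ⟨?_, ?_⟩, rfl⟩
    · convert hωC
      rw [Subtype.ext_iff, homeomorphUnitSphereProd_apply_fst_coe, hωξ]
    · rwa [mem_preimage, homeomorphUnitSphereProd_apply_snd_coe]
  calc μ S ≤ μ ((↑) '' (homeomorphUnitSphereProd E ⁻¹' (C ×ˢ J))) := measure_mono hS_sub
    _ = μ.comap (↑) (homeomorphUnitSphereProd E ⁻¹' (C ×ˢ J)) :=
      (comap_subtype_coe_apply (measurableSet_singleton 0).compl _ _).symm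
    _ = μ.toSphere C * Measure.volumeIoiPow (finrank ℝ E - 1) J := by
      rw [(μ.measurePreserving_homeomorphUnitSphereProd).measure_preimage
        (hC.prod (measurable_subtype_coe measurableSet_Icc)).nullMeasurableSet, Measure.prod_prod]
    _ ≤ _ := by grw [Measure.volumeIoiPow_preimage_Icc_le]

end Polar

section Annulus

variable {F : Type*} [NormedAddCommGroup F] [InnerProductSpace ℝ F] [FiniteDimensional ℝ F]
  [MeasurableSpace F] [BorelSpace F] (μ : Measure F) [μ.IsAddHaarMeasure] {K : ℝ}

lemma finrank_mul_measureReal_ball_le [Nontrivial F] (hcap : CapBound μ K) :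
    finrank ℝ F * μ.real (ball 0 1) ≤ 2 * (K * 2 ^ (finrank ℝ F - 1)) := by
  obtain ⟨ω₀⟩ : Nonempty (sphere (0 : F) 1) :=
    (NormedSpace.sphere_nonempty.2 zero_le_one).to_subtype
  have hcover : univ ⊆ {ω : sphere (0 : F) 1 | ‖(ω : F) - ω₀‖ < 2} ∪
      {ω | ‖(ω : F) - (-ω₀ : sphere (0 : F) 1)‖ < 2} := by
    intro ω _
    by_contra h
    simp only [mem_union, mem_ofPred_eq, not_or, not_lt, coe_neg_sphere, sub_neg_eq_add] at h
    have : ‖(ω : F) - ω₀‖ ^ 2 + ‖(ω : F) + ω₀‖ ^ 2 = 4 := by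
      rw [norm_sub_sq_real, norm_add_sq_real, norm_eq_of_mem_sphere ω, norm_eq_of_mem_sphere ω₀]
      ring
    nlinarith
  have h := (measure_mono hcover).trans ((measure_union_le _ _).trans
    (add_le_add (hcap ω₀ 2 two_pos) (hcap (-ω₀) 2 two_pos)))
  rcases le_or_gt (K * 2 ^ (finrank ℝ F - 1)) 0 with hK | hK
  · rw [ENNReal.ofReal_of_nonpos hK, add_zero, nonpos_iff_eq_zero,
      Measure.measure_univ_eq_zero] at h
    exact absurd h μ.toSphere_ne_zero
  rw [← μ.toSphere_real_apply_univ, two_mul]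
  exact ENNReal.toReal_le_of_le_ofReal (by positivity)
    (h.trans (ENNReal.ofReal_add hK.le hK.le).ge)

lemma measure_annulus_inter_ball_le_of_lt (hcap : CapBound μ K) {s δ r : ℝ} (hδ : 0 ≤ δ)
    (hr : r < s - δ) (x : F) :
    μ ({ξ | |‖ξ‖ - s| ≤ δ} ∩ ball x r) ≤ ENNReal.ofReal
      (K * (r * (s + δ) / √((s - δ) * (s - δ - r))) ^ (finrank ℝ F - 1) * (2 * δ)) := by
  rcases ({ξ | |‖ξ‖ - s| ≤ δ} ∩ ball x r).eq_empty_or_nonempty with h | ⟨ξ₀, hξ₀⟩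
  · simp [h]
  have hr₀ : 0 < r := dist_nonneg.trans_lt hξ₀.2
  have hx : s - δ - r ≤ ‖x‖ := by
    linarith [(abs_lt.1 (abs_norm_sub_lt_of_mem_inter_ball hξ₀)).1]
  have hx₀ : x ≠ 0 := norm_pos_iff.1 (by linarith)
  set Δ := r / √((s - δ) * (s - δ - r))
  have hΔ : 0 < Δ := div_pos hr₀ (Real.sqrt_pos.2 (by nlinarith))
  let ω₀ : sphere (0 : F) 1 := ⟨‖x‖⁻¹ • x, by simpa using norm_smul_inv_norm (𝕜 := ℝ) hx₀⟩
  have hcap_meas : MeasurableSet {ω : sphere (0 : F) 1 | ‖(ω : F) - ω₀‖ < Δ} :=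
    (isOpen_lt (by fun_prop) continuous_const).measurableSet
  calc μ ({ξ | |‖ξ‖ - s| ≤ δ} ∩ ball x r)
      ≤ μ.toSphere {ω | ‖(ω : F) - ω₀‖ < Δ} *
          (ENNReal.ofReal ((s + δ) ^ (finrank ℝ F - 1)) * ENNReal.ofReal (s + δ - (s - δ))) := by
        refine measure_le_toSphere_mul_of_forall_mem μ hcap_meas (by linarith) fun ξ hξ ↦ ?_
        have hξs := abs_le.1 (show |‖ξ‖ - s| ≤ δ from hξ.1)
        have hξa : s - δ ≤ ‖ξ‖ := by linarith
        refine ⟨⟨hξa, by linarith⟩, ⟨‖ξ‖⁻¹ • ξ, ?_⟩, ?_, rfl⟩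
        · simpa using norm_smul_inv_norm (𝕜 := ℝ) (norm_pos_iff.1 (by linarith) : ξ ≠ 0)
        · exact norm_inv_smul_sub_inv_smul_lt (by linarith) (by linarith) hξa hx
            (by rw [← dist_eq_norm]; exact hξ.2)
    _ ≤ ENNReal.ofReal (K * Δ ^ (finrank ℝ F - 1)) *
          (ENNReal.ofReal ((s + δ) ^ (finrank ℝ F - 1)) * ENNReal.ofReal (2 * δ)) := by
        rw [show s + δ - (s - δ) = 2 * δ by ring]
        grw [hcap ω₀ Δ hΔ]
    _ = _ := by
        have hb : 0 ≤ s + δ := by linarith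
        rw [← ENNReal.ofReal_mul (by positivity), ← ENNReal.ofReal_mul' (by positivity)]
        congr 1
        rw [mul_div_right_comm, mul_pow]
        ring

lemma measure_annulus_inter_ball_le (hK : 0 ≤ K) (hcap : CapBound μ K) {L s δ r : ℝ}
    (hL : 3 / 2 * finrank ℝ F ≤ L) (hs : 2 * L + 1 ≤ s) (hδ₀ : 0 ≤ δ) (hδ₁ : δ ≤ 1)
    (hr : r ≤ L) (x : F) :
    μ ({ξ | |‖ξ‖ - s| ≤ δ} ∩ ball x r) ≤
      ENNReal.ofReal (K * (2 * r) ^ (finrank ℝ F - 1) * (2 * δ)) := by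
  rcases le_or_gt r 0 with hr₀ | hr₀
  · simp [ball_eq_empty.2 hr₀]
  refine (measure_annulus_inter_ball_le_of_lt μ hcap hδ₀ (by linarith) x).trans
    (ENNReal.ofReal_le_ofReal ?_)
  rcases le_or_gt (finrank ℝ F) 1 with hn | hn
  · simp [Nat.sub_eq_zero_of_le hn]
  have hL₃ : 3 ≤ L := by
    have : (2 : ℝ) ≤ finrank ℝ F := by exact_mod_cast hn
    linarith
  have hsqrt := add_le_two_mul_sqrt_mul hL₃ hs hδ₀ hδ₁ hr
  have hbase : r * (s + δ) / √((s - δ) * (s - δ - r)) ≤ 2 * r := by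
    rw [div_le_iff₀ (by linarith), mul_comm 2 r, mul_assoc]
    exact mul_le_mul_of_nonneg_left hsqrt hr₀.le
  gcongr
  exact div_nonneg (mul_nonneg hr₀.le (by linarith)) (Real.sqrt_nonneg _)

lemma measure_annulus_inter_ball_le_mul_measure_ball [Nontrivial F] (hK : 0 ≤ K)
    (hcap : CapBound μ K) {L s δ r ε : ℝ} (hL : 3 / 2 * finrank ℝ F ≤ L) (hs : 2 * L + 1 ≤ s)
    (hδ₀ : 0 ≤ δ) (hδ₁ : δ ≤ 1) (hr : r ≤ L)
    (hδr : 2 * (K * 2 ^ (finrank ℝ F - 1)) * δ ≤ ε * μ.real (ball 0 1) * r) (x : F) :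
    μ ({ξ | |‖ξ‖ - s| ≤ δ} ∩ ball x r) ≤ ENNReal.ofReal ε * μ (ball x r) := by
  rcases le_or_gt r 0 with hr₀ | hr₀
  · simp [ball_eq_empty.2 hr₀]
  have hpow : r ^ finrank ℝ F = r ^ (finrank ℝ F - 1) * r := by
    rw [← pow_succ, Nat.sub_add_cancel finrank_pos]
  calc _ ≤ ENNReal.ofReal (K * (2 * r) ^ (finrank ℝ F - 1) * (2 * δ)) :=
        measure_annulus_inter_ball_le μ hK hcap hL hs hδ₀ hδ₁ hr x
    _ ≤ ENNReal.ofReal (ε * (r ^ finrank ℝ F * μ.real (ball 0 1))) := by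
        refine ENNReal.ofReal_le_ofReal ?_
        rw [mul_pow, hpow]
        nlinarith [mul_le_mul_of_nonneg_left hδr (pow_nonneg hr₀.le (finrank ℝ F - 1))]
    _ = ENNReal.ofReal ε * μ (ball x r) := by
        rw [μ.addHaar_ball x hr₀.le, ENNReal.ofReal_mul' (by positivity),
          ENNReal.ofReal_mul (by positivity), ofReal_measureReal]

lemma measure_annulus_inter_ball_density_le [Nontrivial F] {C β ε L s : ℝ}
    (hcap : CapBound μ (C / 2 ^ (finrank ℝ F - 1))) (hβ : 0 ≤ β) (hε : 0 < ε)
    (hL : L = 3 ^ (1 + β) * C / (ε * μ.real (ball 0 1))) (hs : 2 * L + 1 ≤ s) (x : F) :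
    μ ({ξ | |‖ξ‖ - s| ≤ s ^ (-β)} ∩ ball x (min L (L ^ (1 + β) * ‖x‖ ^ (-β)))) ≤
      ENNReal.ofReal ε * μ (ball x (min L (L ^ (1 + β) * ‖x‖ ^ (-β)))) := by
  set ρ := min L (L ^ (1 + β) * ‖x‖ ^ (-β))
  rcases le_or_gt 1 ε with hε₁ | hε₁
  · exact (measure_mono inter_subset_right).trans
      (le_mul_of_one_le_left' (ENNReal.one_le_ofReal.2 hε₁))
  set ω := μ.real (ball (0 : F) 1)
  have hω : 0 < ω := ENNReal.toReal_pos (measure_ball_pos _ _ one_pos).ne' measure_ball_lt_top.ne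
  have hK : C / 2 ^ (finrank ℝ F - 1) * 2 ^ (finrank ℝ F - 1) = C :=
    div_mul_cancel₀ _ (by positivity)
  have hC : finrank ℝ F * ω ≤ 2 * C := hK ▸ finrank_mul_measureReal_ball_le μ hcap
  have hεL : ε * ω * L = 3 ^ (1 + β) * C := by rw [hL]; field_simp
  have hL₀ := three_halves_mul_le_of_mul_eq hβ (Nat.cast_nonneg _) hω hε hε₁.le hC hεL
  have hn : (1 : ℝ) ≤ finrank ℝ F := by exact_mod_cast finrank_pos
  have hC₀ : 0 ≤ C := by nlinarith
  have hs₀ : 0 < s := by linarith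
  have hδ₁ : s ^ (-β) ≤ 1 := Real.rpow_le_one_of_one_le_of_nonpos (by linarith) (by linarith)
  rcases ({ξ | |‖ξ‖ - s| ≤ s ^ (-β)} ∩ ball x ρ).eq_empty_or_nonempty with h | ⟨ξ, hξ⟩
  · simp [h]
  have hx := abs_lt.1 (abs_norm_sub_lt_of_mem_inter_ball hξ)
  have hρL : ρ ≤ L := min_le_left _ _
  refine measure_annulus_inter_ball_le_mul_measure_ball μ (div_nonneg hC₀ (by positivity)) hcap
    hL₀ hs (Real.rpow_nonneg hs₀.le _) hδ₁ hρL ?_ x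
  rw [hK]
  have hεω : ε * ω = 3 ^ (1 + β) / L * C := by
    rw [div_mul_eq_mul_div, ← hεL, mul_div_cancel_right₀ _ (by linarith)]
  calc 2 * C * s ^ (-β) ≤ C * (3 * s ^ (-β)) := by nlinarith [Real.rpow_nonneg hs₀.le (-β)]
    _ ≤ C * (3 ^ (1 + β) / L * ρ) :=
        mul_le_mul_of_nonneg_left (three_mul_rpow_neg_le_mul_min hβ (by linarith) (by linarith)
          (by linarith) (by linarith)) hC₀
    _ = ε * ω * ρ := by rw [hεω]; ring

end Annulus

theorem stmt3_general (d : ℕ) (hd : 1 ≤ d) (β : ℝ) (hβ : 0 < β)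
    (Cd' : ℝ)
    (hcap : ∀ (ω₀ : sphere (0 : EuclideanSpace ℝ (Fin d)) 1) (δ : ℝ), 0 < δ →
      (volume : Measure (EuclideanSpace ℝ (Fin d))).toSphere
          {ω : sphere (0 : EuclideanSpace ℝ (Fin d)) 1 | ‖(ω : EuclideanSpace ℝ (Fin d)) - ω₀‖ < δ}
        ≤ ENNReal.ofReal (Cd' / 2 ^ (d - 1) * δ ^ (d - 1)))
    (ωd : ℝ) (hωd : ωd = (volume (ball (0 : EuclideanSpace ℝ (Fin d)) 1)).toReal)
    (ε : ℝ) (hε : 0 < ε)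
    (L : ℝ) (hL : L = 3 ^ (1 + β) * Cd' / (ε * ωd))
    (ρ : EuclideanSpace ℝ (Fin d) → ℝ)
    (hρ : ∀ x, ρ x = min L (L ^ (1 + β) * ‖x‖ ^ (-β))) :
    ∃ lam₀ : ℝ, lam₀ = (2 * L + 1) ^ 2 ∧
      ∀ lam : ℝ, lam₀ ≤ lam → ∀ x : EuclideanSpace ℝ (Fin d),
        volume ({ξ : EuclideanSpace ℝ (Fin d) | |‖ξ‖ - Real.sqrt lam| ≤ lam ^ (-(β / 2))}
            ∩ ball x (ρ x))
          ≤ ENNReal.ofReal ε * volume (ball x (ρ x)) := by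
  have : Nontrivial (EuclideanSpace ℝ (Fin d)) :=
    Module.nontrivial_of_finrank_pos (R := ℝ) (by rw [finrank_euclideanSpace_fin]; omega)
  refine ⟨_, rfl, fun lam hlam x => ?_⟩
  have hs : 2 * L + 1 ≤ √lam := Real.le_sqrt_of_sq_le hlam
  have hδ : lam ^ (-(β / 2)) = √lam ^ (-β) := by
    rw [Real.sqrt_eq_rpow, ← Real.rpow_mul ((sq_nonneg _).trans hlam)]
    ring_nf
  rw [hδ, hρ x]
  subst hωd
  exact measure_annulus_inter_ball_density_le volume
    (fun ω₀ δ hδ ↦ by simpa only [finrank_euclideanSpace_fin] using hcap ω₀ δ hδ) hβ.le hε hL hs x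

/-- Thinness of the annulus `A_{λ,β} = {ξ : ||ξ| − √λ| ≤ λ^{−β/2}}` with respect to the
decaying density `ρ̃(x) = min(L, L^{1+β}|x|^{−β})`, `L = 3^{1+β} C_d' / (ε ω_d)`, for
`λ ≥ λ₀ = (2L+1)²`. Here `C_d'` is a dimensional constant bounding spherical cap areas
and `ω_d` is the volume of the unit ball. -/
theorem stmt3 (d : ℕ) (hd : 1 ≤ d) (β : ℝ) (hβ : 0 < β)
    (Cd' : ℝ) (hCd' : 0 < Cd')
    (hcap : ∀ (ω₀ : sphere (0 : EuclideanSpace ℝ (Fin d)) 1) (δ : ℝ), 0 < δ →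
      (volume : Measure (EuclideanSpace ℝ (Fin d))).toSphere
          {ω : sphere (0 : EuclideanSpace ℝ (Fin d)) 1 | ‖(ω : EuclideanSpace ℝ (Fin d)) - ω₀‖ < δ}
        ≤ ENNReal.ofReal (Cd' / 2 ^ (d - 1) * δ ^ (d - 1)))
    (ωd : ℝ) (hωd : ωd = (volume (ball (0 : EuclideanSpace ℝ (Fin d)) 1)).toReal)
    (ε : ℝ) (hε : 0 < ε)
    (L : ℝ) (hL : L = 3 ^ (1 + β) * Cd' / (ε * ωd))
    (ρ : EuclideanSpace ℝ (Fin d) → ℝ)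
    (hρ : ∀ x, ρ x = min L (L ^ (1 + β) * ‖x‖ ^ (-β))) :
    ∃ lam₀ : ℝ, lam₀ = (2 * L + 1) ^ 2 ∧
      ∀ lam : ℝ, lam₀ ≤ lam → ∀ x : EuclideanSpace ℝ (Fin d),
        volume ({ξ : EuclideanSpace ℝ (Fin d) | |‖ξ‖ - Real.sqrt lam| ≤ lam ^ (-(β / 2))}
            ∩ ball x (ρ x))
          ≤ ENNReal.ofReal ε * volume (ball x (ρ x)) :=
  stmt3_general d hd β hβ Cd' hcap ωd hωd ε hε L hL ρ hρ
end

section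
/- Let d ≥ 1 and 0 < a ≤ b. Let A = {ξ ∈ ℝ^d : a ≤ |ξ| ≤ b}, let x ∈ ℝ^d and r > 0. Then the Lebesgue measure of A ∩ B(x, r) is at most C_d' · r^{d−1} · (b − a), where C_d' is a dimensional constant such that every spherical cap of Euclidean radius δ on S^{d−1} has surface measure at most (C_d'/2^{d−1}) δ^{d−1}. -/
open MeasureTheory Metric Set
open scoped ENNReal NNReal


set_option maxHeartbeats 1000000 in
private lemma stmt4_aux {E : Type*} [NormedAddCommGroup E] [NormedSpace ℝ E]
    [MeasurableSpace E] [BorelSpace E] [FiniteDimensional ℝ E]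
    (μ : Measure E) [μ.IsAddHaarMeasure]
    (d : ℕ) (hd : 1 ≤ d) (hdim : Module.finrank ℝ E = d)
    (Cd' : ℝ) (hCd' : 0 < Cd')
    (hcap : ∀ (ω₀ : sphere (0 : E) 1) (δ : ℝ), 0 < δ →
      μ.toSphere {ω : sphere (0 : E) 1 | ‖(ω : E) - ω₀‖ < δ}
        ≤ ENNReal.ofReal (Cd' / 2 ^ (d - 1) * δ ^ (d - 1)))
    (a b : ℝ) (ha : 0 < a) (hab : a ≤ b)
    (x : E) (r : ℝ) (hr : 0 < r) :
    μ ({ξ : E | a ≤ ‖ξ‖ ∧ ‖ξ‖ ≤ b} ∩ ball x r)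
      ≤ ENNReal.ofReal (Cd' * r ^ (d - 1) * (b - a)) := by

  haveI : Nontrivial E := Module.nontrivial_of_finrank_pos (R := ℝ) (by omega : 0 < Module.finrank ℝ E)
  -- choose the cap center
  obtain ⟨ω₀, hω₀⟩ : ∃ ω₀ : sphere (0:E) 1, ∀ s : ℝ, 0 < s → ∀ ω : sphere (0:E) 1,
      ‖s • (ω:E) - x‖ < r → ‖(ω:E) - (ω₀:E)‖ < 2*r/s := by
    have hsph : (sphere (0:E) 1).Nonempty := NormedSpace.sphere_nonempty.mpr zero_le_one
    rcases eq_or_ne x 0 with hx | hx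
    · obtain ⟨y, hy⟩ := hsph
      refine ⟨⟨y, hy⟩, fun s hs ω hω => ?_⟩
      subst hx
      rw [sub_zero, norm_smul, Real.norm_eq_abs, abs_of_pos hs,
        mem_sphere_zero_iff_norm.mp ω.2, mul_one] at hω
      have h2 : ‖(ω:E) - y‖ ≤ 2 := by
        calc ‖(ω:E) - y‖ ≤ ‖(ω:E)‖ + ‖y‖ := norm_sub_le _ _
        _ ≤ 2 := by
          rw [mem_sphere_zero_iff_norm.mp ω.2, mem_sphere_zero_iff_norm.mp hy]; norm_num
      have : (2:ℝ) < 2*r/s := by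
        rw [lt_div_iff₀ hs]
        nlinarith
      linarith
    · refine ⟨⟨‖x‖⁻¹ • x, by simp [norm_smul, norm_ne_zero_iff.mpr hx]⟩, fun s hs ω hω => ?_⟩
      have hxn : ‖x‖ ≠ 0 := norm_ne_zero_iff.mpr hx
      have hxsm : ‖x‖ • (‖x‖⁻¹ • x) = x := smul_inv_smul₀ hxn x
      have hωn : ‖(ω:E)‖ = 1 := mem_sphere_zero_iff_norm.mp ω.2
      have hsn : ‖s • (ω:E)‖ = s := by
        rw [norm_smul, Real.norm_eq_abs, abs_of_pos hs, hωn, mul_one]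
      have h1 : |‖x‖ - s| < r := by
        rw [← hsn]
        calc |‖x‖ - ‖s • (ω:E)‖| ≤ ‖x - s • (ω:E)‖ := abs_norm_sub_norm_le _ _
        _ = ‖s • (ω:E) - x‖ := norm_sub_rev _ _
        _ < r := hω
      have h2 : ‖x - s • (‖x‖⁻¹ • x)‖ < r := by
        calc ‖x - s • (‖x‖⁻¹ • x)‖ = ‖(‖x‖ - s) • (‖x‖⁻¹ • x)‖ := by
              rw [sub_smul, hxsm]
        _ = |‖x‖ - s| * 1 := by
              rw [norm_smul, Real.norm_eq_abs, norm_smul, norm_inv, norm_norm,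
                inv_mul_cancel₀ hxn]
        _ < r := by rw [mul_one]; exact h1
      have key : s * ‖(ω:E) - ‖x‖⁻¹ • x‖ < 2 * r := by
        calc s * ‖(ω:E) - ‖x‖⁻¹ • x‖ = ‖s • (ω:E) - s • (‖x‖⁻¹ • x)‖ := by
              rw [← smul_sub, norm_smul, Real.norm_eq_abs, abs_of_pos hs]
        _ ≤ ‖s • (ω:E) - x‖ + ‖x - s • (‖x‖⁻¹ • x)‖ := by
              simpa using norm_sub_le_norm_sub_add_norm_sub (s • (ω:E)) x (s • (‖x‖⁻¹ • x))
        _ < r + r := add_lt_add hω h2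
        _ = 2 * r := by ring
      rw [lt_div_iff₀ hs]
      calc ‖(ω:E) - ‖x‖⁻¹ • x‖ * s = s * ‖(ω:E) - ‖x‖⁻¹ • x‖ := mul_comm _ _
      _ < 2 * r := key
  -- the set in product coordinates
  set T : Set (sphere (0:E) 1 × Ioi (0:ℝ)) :=
    {p | (a ≤ (p.2:ℝ) ∧ (p.2:ℝ) ≤ b) ∧ ‖(p.2:ℝ) • (p.1:E) - x‖ < r} with hT
  have hc1 : Continuous fun p : sphere (0:E) 1 × Ioi (0:ℝ) => (p.2 : ℝ) :=
    continuous_subtype_val.comp continuous_snd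
  have hc2 : Continuous fun p : sphere (0:E) 1 × Ioi (0:ℝ) => ‖(p.2:ℝ) • (p.1:E) - x‖ :=
    ((hc1.smul ((continuous_subtype_val.comp continuous_fst))).sub continuous_const).norm
  have hTm : MeasurableSet T := by
    refine (MeasurableSet.inter ?_ ?_).inter ?_
    · exact measurableSet_le measurable_const hc1.measurable
    · exact measurableSet_le hc1.measurable measurable_const
    · exact measurableSet_lt hc2.measurable measurable_const
  set S : Set E := {ξ : E | a ≤ ‖ξ‖ ∧ ‖ξ‖ ≤ b} ∩ ball x r with hS
  have hmp := μ.measurePreserving_homeomorphUnitSphereProd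
  rw [hdim] at hmp
  have hpre : (homeomorphUnitSphereProd E) ⁻¹' T = (Subtype.val : ({0}ᶜ : Set E) → E) ⁻¹' S := by
    ext v
    have hv : v.1 ≠ 0 := v.2
    have hvn : ‖v.1‖ ≠ 0 := norm_ne_zero_iff.mpr hv
    simp only [hT, hS, mem_preimage, mem_setOf_eq, homeomorphUnitSphereProd_apply_snd_coe,
      homeomorphUnitSphereProd_apply_fst_coe, mem_inter_iff, mem_ball, dist_eq_norm]
    rw [smul_inv_smul₀ hvn]
  have hS0 : (0:E) ∉ S := by
    intro h
    have := h.1.1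
    rw [norm_zero] at this
    linarith
  have step1 : μ S = (μ.toSphere.prod
      (Measure.volumeIoiPow (d-1))) T := by
    rw [← hmp.measure_preimage hTm.nullMeasurableSet, hpre,
      comap_subtype_coe_apply (measurableSet_singleton (0:E)).compl,
      Subtype.image_preimage_coe]
    congr 1
    symm
    rw [inter_eq_right]
    intro ξ hξ
    simp only [mem_compl_iff, mem_singleton_iff]
    rintro rfl
    exact hS0 hξ
  refine le_trans (le_of_eq step1) ?_
  rw [Measure.prod_apply_symm hTm]
  -- pointwise bound on slices
  set c : ℝ≥0∞ := ENNReal.ofReal (Cd' * r ^ (d-1)) with hc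
  have slice_bound : ∀ s : Ioi (0:ℝ),
      μ.toSphere ((fun ω => (ω, s)) ⁻¹' T)
        ≤ (Icc a b).indicator (fun t => ENNReal.ofReal (Cd' / 2^(d-1) * (2*r/t)^(d-1))) (s:ℝ) := by
    intro s
    by_cases hs : (s:ℝ) ∈ Icc a b
    · rw [indicator_of_mem hs]
      have hspos : (0:ℝ) < s := s.2
      have hδ : (0:ℝ) < 2*r/s := by positivity
      refine le_trans (measure_mono ?_) (hcap ω₀ _ hδ)
      intro ω hω
      exact hω₀ s hspos ω hω.2
    · rw [indicator_of_notMem hs]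
      have hemp : ((fun ω : sphere (0:E) 1 => (ω, s)) ⁻¹' T) = ∅ :=
        eq_empty_iff_forall_notMem.mpr fun ω h => hs ⟨h.1.1, h.1.2⟩
      rw [hemp, measure_empty]
  refine le_trans (lintegral_mono slice_bound) ?_
  -- unfold the density measure
  rw [Measure.volumeIoiPow, lintegral_withDensity_eq_lintegral_mul_non_measurable _
      ((measurable_subtype_coe.pow_const _).ennreal_ofReal) (ae_of_all _ fun y => ENNReal.ofReal_lt_top)]
  refine le_trans (le_of_eq (lintegral_subtype_comap measurableSet_Ioi
    (fun t : ℝ => ENNReal.ofReal (t ^ (d-1)) *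
      (Icc a b).indicator (fun t => ENNReal.ofReal (Cd' / 2^(d-1) * (2*r/t)^(d-1))) t))) ?_
  have ptwise : ∀ t : ℝ, ENNReal.ofReal (t ^ (d-1)) *
      (Icc a b).indicator (fun t => ENNReal.ofReal (Cd' / 2^(d-1) * (2*r/t)^(d-1))) t
      ≤ (Icc a b).indicator (fun _ => c) t := by
    intro t
    by_cases ht : t ∈ Icc a b
    · have htpos : 0 < t := lt_of_lt_of_le ha ht.1
      rw [indicator_of_mem ht, indicator_of_mem ht,
        ← ENNReal.ofReal_mul (pow_nonneg htpos.le _)]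
      apply ENNReal.ofReal_le_ofReal
      have htne : t ≠ 0 := ne_of_gt htpos
      have heq : t ^ (d-1) * (Cd' / 2^(d-1) * (2*r/t)^(d-1)) = Cd' * r^(d-1) := by
        rw [div_pow, mul_pow]
        field_simp
      rw [heq]
    · rw [indicator_of_notMem ht, indicator_of_notMem ht, mul_zero]
  refine le_trans (lintegral_mono ptwise) ?_
  rw [lintegral_indicator measurableSet_Icc, setLIntegral_const]
  calc c * ((volume : Measure ℝ).restrict (Ioi 0)) (Icc a b)
      ≤ c * volume (Icc a b) := mul_le_mul_right (Measure.restrict_le_self _) _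
    _ = c * ENNReal.ofReal (b - a) := by rw [Real.volume_Icc]
    _ = ENNReal.ofReal (Cd' * r ^ (d-1) * (b - a)) := by
        rw [hc, ← ENNReal.ofReal_mul (by positivity)]

/-- The annulus–ball measure estimate: if every spherical cap of Euclidean radius `δ`
on `S^{d-1}` has surface measure at most `(C_d'/2^{d-1}) δ^{d-1}`, then for `0 < a ≤ b` the
Lebesgue measure of `{a ≤ |ξ| ≤ b} ∩ B(x, r)` is at most `C_d' r^{d-1} (b - a)`. -/
theorem stmt4 (d : ℕ) (hd : 1 ≤ d) (Cd' : ℝ) (hCd' : 0 < Cd')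
    (hcap : ∀ (ω₀ : sphere (0 : EuclideanSpace ℝ (Fin d)) 1) (δ : ℝ), 0 < δ →
      (volume : Measure (EuclideanSpace ℝ (Fin d))).toSphere
          {ω : sphere (0 : EuclideanSpace ℝ (Fin d)) 1 | ‖(ω : EuclideanSpace ℝ (Fin d)) - ω₀‖ < δ}
        ≤ ENNReal.ofReal (Cd' / 2 ^ (d - 1) * δ ^ (d - 1)))
    (a b : ℝ) (ha : 0 < a) (hab : a ≤ b)
    (x : EuclideanSpace ℝ (Fin d)) (r : ℝ) (hr : 0 < r) :
    volume ({ξ : EuclideanSpace ℝ (Fin d) | a ≤ ‖ξ‖ ∧ ‖ξ‖ ≤ b} ∩ ball x r)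
      ≤ ENNReal.ofReal (Cd' * r ^ (d - 1) * (b - a)) :=
  stmt4_aux volume d hd finrank_euclideanSpace_fin Cd' hCd' hcap a b ha hab x r hr
end
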